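/- Let a ∈ C³[0,1] and b ∈ C²[0,1] be real-valued, let λ_n (n ≥ 1) be the eigenvalues of the damped wave eigenvalue problem in the upper half-plane enumeration, and set c_0 = −⟨a⟩. Then for real λ → +∞, Σ_{n=1}^∞ ((π²n² − |λ_n|² + 2λ Re λ_n)/(π²n² + λ²))² = c_0² λ^{−1} + O(λ^{−2}). -/

import Mathlib

/-!
Write `λ` for the real parameter and `Aλ = 2λc₀ + ⟨a² + b⟩ - c₀²`. By the eigenvalue
asymptotics the `n`-th numerator is `Aλ + δₙ` with `δₙ = O(λ n⁻²)`, so up to an error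
`O(λ⁻²)` the series is `Aλ² ∑ₙ (π²n² + λ²)⁻²`. The integral test against
`∫₀^∞ (π²x² + λ²)⁻² dx = 1 / (4λ³)` gives this sum up to `O(λ⁻⁴)`, and
`Aλ² / (4λ³) = c₀² / λ + O(λ⁻²)`.
-/

/-- `⟨f⟩ = ∫₀¹ f(x) dx` for a function on `[0,1]`. -/
noncomputable def intAvg (f : ℝ → ℝ) : ℝ := ∫ x in (0:ℝ)..1, f x

/-- `λ` is an eigenvalue of the damped wave eigenvalue problem
`u'' − (λ² + 2λa − b)u = 0` on `(0,1)`, `u(0) = u(1) = 0`. -/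
def IsDampedEigenvalue (a b : ℝ → ℝ) (l : ℂ) : Prop :=
  ∃ u : ℝ → ℂ,
    ContDiffOn ℝ 2 u (Set.Icc 0 1) ∧
    (∃ x ∈ Set.Icc (0:ℝ) 1, u x ≠ 0) ∧
    (∀ x ∈ Set.Ioo (0:ℝ) 1,
      deriv (deriv u) x = (l ^ 2 + 2 * l * (a x : ℂ) - (b x : ℂ)) * u x) ∧
    u 0 = 0 ∧ u 1 = 0

open Real Set Filter Topology MeasureTheory

theorem AntitoneOn.abs_tsum_add_one_sub_integral_le {f : ℝ → ℝ} (anti : AntitoneOn f (Ici 0))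
    (integrable : IntegrableOn f (Ioi 0)) (nonneg : ∀ t ∈ Ioi 0, 0 ≤ f t) :
    Summable (fun n : ℕ => f (n + 1)) ∧
      |∑' n : ℕ, f (n + 1) - ∫ x in Ioi 0, f x| ≤ f 0 := by
  have hsum := anti.summable_of_integrableOn_Ioi_zero integrable nonneg
  have hsum' : Summable (fun n : ℕ => f (n + 1)) := by
    exact_mod_cast (summable_nat_add_iff 1).mpr hsum
  have upper := anti.tsum_add_one_le_integral integrable nonneg
  have lower := anti.integral_le_tsum hsum nonneg
  rw [hsum.tsum_eq_zero_add] at lower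
  push_cast at upper lower
  refine ⟨hsum', abs_le.mpr ⟨?_, ?_⟩⟩ <;> linarith

theorem tendsto_div_sq_mul_sq_add_sq_atTop {c : ℝ} (hc : c ≠ 0) (l : ℝ) :
    Tendsto (fun x => x / (c ^ 2 * x ^ 2 + l ^ 2)) atTop (𝓝 0) := by
  have hbound : Tendsto (fun x : ℝ => (c ^ 2)⁻¹ * x⁻¹) atTop (𝓝 0) := by
    convert tendsto_inv_atTop_zero.const_mul (c ^ 2)⁻¹ using 2
    rw [mul_zero]
  refine tendsto_of_tendsto_of_tendsto_of_le_of_le' tendsto_const_nhds hbound ?_ ?_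
  · filter_upwards [eventually_ge_atTop 0] with x hx
    positivity
  · filter_upwards [eventually_gt_atTop 0] with x hx
    calc x / (c ^ 2 * x ^ 2 + l ^ 2) ≤ x / (c ^ 2 * x ^ 2) := by gcongr; linarith [sq_nonneg l]
      _ = (c ^ 2)⁻¹ * x⁻¹ := by field_simp

-- The substitution `c x = l tan θ` reduces the integral to `∫ cos² θ dθ`.
theorem hasDerivAt_inv_sq_mul_sq_add_sq_sq_antideriv {c l : ℝ} (hc : c ≠ 0) (hl : l ≠ 0)
    (x : ℝ) :
    HasDerivAt (fun x => x / (c ^ 2 * x ^ 2 + l ^ 2) / (2 * l ^ 2)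
        + arctan (c * x / l) / (2 * c * l ^ 3))
      (1 / (c ^ 2 * x ^ 2 + l ^ 2) ^ 2) x := by
  have hden : c ^ 2 * x ^ 2 + l ^ 2 ≠ 0 := by positivity
  have hquot : HasDerivAt (fun x => c * x / l) (c / l) x := by
    simpa using ((hasDerivAt_id x).const_mul c).div_const l
  refine ((hasDerivAt_id x).div (((hasDerivAt_pow 2 x).const_mul (c ^ 2)).add_const (l ^ 2)) hden
    |>.div_const (2 * l ^ 2)).add
    ((hasDerivAt_arctan _).comp x hquot |>.div_const (2 * c * l ^ 3)) |>.congr_deriv ?_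
  simp only [id]
  field_simp
  ring

theorem integral_Ioi_inv_sq_mul_sq_add_sq_sq {c l : ℝ} (hc : 0 < c) (hl : 0 < l) :
    IntegrableOn (fun x => 1 / (c ^ 2 * x ^ 2 + l ^ 2) ^ 2) (Ioi 0) ∧
      ∫ x in Ioi 0, 1 / (c ^ 2 * x ^ 2 + l ^ 2) ^ 2 = π / (4 * c * l ^ 3) := by
  have hderiv := fun x (_ : x ∈ Ici (0 : ℝ)) =>
    hasDerivAt_inv_sq_mul_sq_add_sq_sq_antideriv hc.ne' hl.ne' x
  have hnonneg : ∀ x ∈ Ioi (0 : ℝ), 0 ≤ 1 / (c ^ 2 * x ^ 2 + l ^ 2) ^ 2 :=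
    fun x _ => by positivity
  have hlim : Tendsto (fun x => x / (c ^ 2 * x ^ 2 + l ^ 2) / (2 * l ^ 2)
      + arctan (c * x / l) / (2 * c * l ^ 3))
      atTop (𝓝 (0 / (2 * l ^ 2) + (π / 2) / (2 * c * l ^ 3))) :=
    ((tendsto_div_sq_mul_sq_add_sq_atTop hc.ne' l).div_const _).add
      (((tendsto_arctan_atTop.mono_right nhdsWithin_le_nhds).comp
        ((tendsto_id.const_mul_atTop hc).atTop_div_const hl)).div_const _)
  refine ⟨integrableOn_Ioi_deriv_of_nonneg' hderiv hnonneg hlim, ?_⟩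
  rw [integral_Ioi_of_hasDerivAt_of_nonneg' hderiv hnonneg hlim]
  simp only [mul_zero, zero_div, arctan_zero, add_zero, zero_add]
  field_simp
  ring

theorem summable_and_abs_tsum_inv_sq_mul_sq_add_sq_sq_sub_le {c l : ℝ} (hc : 0 < c) (hl : 0 < l) :
    Summable (fun n : ℕ => 1 / (c ^ 2 * ((n : ℝ) + 1) ^ 2 + l ^ 2) ^ 2) ∧
      |∑' n : ℕ, 1 / (c ^ 2 * ((n : ℝ) + 1) ^ 2 + l ^ 2) ^ 2 - π / (4 * c * l ^ 3)|
        ≤ 1 / l ^ 4 := by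
  obtain ⟨hint, hval⟩ := integral_Ioi_inv_sq_mul_sq_add_sq_sq hc hl
  have anti : AntitoneOn (fun x => 1 / (c ^ 2 * x ^ 2 + l ^ 2) ^ 2) (Ici 0) := by
    intro x hx y hy hxy
    have : x ^ 2 ≤ y ^ 2 := pow_le_pow_left₀ hx hxy 2
    dsimp only
    gcongr
  have := anti.abs_tsum_add_one_sub_integral_le hint fun x _ => by positivity
  rw [hval] at this
  simpa [← pow_mul] using this

theorem abs_two_mul_mul_add_le {l c B : ℝ} (hl : 1 ≤ l) :
    |2 * l * c + B| ≤ l * (2 * |c| + |B|) := by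
  calc |2 * l * c + B| ≤ 2 * l * |c| + |B| := by
        refine (abs_add_le _ _).trans ?_
        rw [abs_mul, abs_of_nonneg (by linarith : 0 ≤ 2 * l)]
    _ ≤ l * (2 * |c| + |B|) := by nlinarith [abs_nonneg B]

theorem abs_sq_div_add_sub_sq_div_le {A δ d l M C m : ℝ} (hl : 0 < l) (hd : l ^ 2 ≤ d)
    (hm : 1 ≤ m) (hA : |A| ≤ l * M) (hδ : |δ| ≤ l * C / m) :
    |((A + δ) / d) ^ 2 - A ^ 2 / d ^ 2| ≤ (2 * M * C + C ^ 2) / l ^ 2 * (1 / m) := by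
  have hm0 : 0 < m := one_pos.trans_le hm
  have hM : 0 ≤ M := nonneg_of_mul_nonneg_right ((abs_nonneg A).trans hA) hl
  have hC : 0 ≤ C := by
    have := (abs_nonneg δ).trans hδ
    rw [le_div_iff₀ hm0, zero_mul] at this
    exact nonneg_of_mul_nonneg_right this hl
  have hδ2 : |δ| ^ 2 ≤ l ^ 2 * C ^ 2 / m := by
    calc |δ| ^ 2 ≤ (l * C / m) ^ 2 := pow_le_pow_left₀ (abs_nonneg δ) hδ 2
      _ = l ^ 2 * C ^ 2 / m * (1 / m) := by ring
      _ ≤ l ^ 2 * C ^ 2 / m * 1 := by gcongr; exact (div_le_one hm0).mpr hm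
      _ = l ^ 2 * C ^ 2 / m := mul_one _
  have hd0 : 0 < d := (by positivity : 0 < l ^ 2).trans_le hd
  have hd4 : l ^ 4 ≤ d ^ 2 := by nlinarith
  have hdiff : ((A + δ) / d) ^ 2 - A ^ 2 / d ^ 2 = (2 * A * δ + δ ^ 2) / d ^ 2 := by
    field_simp
    ring
  calc |((A + δ) / d) ^ 2 - A ^ 2 / d ^ 2| = |2 * A * δ + δ ^ 2| / d ^ 2 := by
        rw [hdiff, abs_div, abs_of_pos (by positivity : 0 < d ^ 2)]
    _ ≤ (2 * |A| * |δ| + |δ| ^ 2) / l ^ 4 := by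
        gcongr
        calc |2 * A * δ + δ ^ 2| ≤ |2 * A * δ| + |δ ^ 2| := abs_add_le _ _
          _ = 2 * |A| * |δ| + |δ| ^ 2 := by rw [abs_mul, abs_mul, abs_two, abs_pow]
    _ ≤ (2 * (l * M) * (l * C / m) + l ^ 2 * C ^ 2 / m) / l ^ 4 := by gcongr
    _ = (2 * M * C + C ^ 2) / l ^ 2 * (1 / m) := by field_simp

theorem summable_and_abs_tsum_sq_div_sub_le {A l M C : ℝ} {δ d : ℕ → ℝ} (hl : 0 < l)
    (hd : ∀ n, l ^ 2 ≤ d n) (hA : |A| ≤ l * M)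
    (hδ : ∀ n : ℕ, |δ n| ≤ l * C / ((n : ℝ) + 1) ^ 2)
    (hsum : Summable fun n => 1 / d n ^ 2) :
    Summable (fun n => ((A + δ n) / d n) ^ 2) ∧
      |∑' n, ((A + δ n) / d n) ^ 2 - A ^ 2 * ∑' n, 1 / d n ^ 2|
        ≤ (2 * M * C + C ^ 2) / l ^ 2 * ∑' n : ℕ, 1 / ((n : ℝ) + 1) ^ 2 := by
  have hinv : Summable (fun n : ℕ => 1 / ((n : ℝ) + 1) ^ 2) := by
    exact_mod_cast (summable_nat_add_iff 1).mpr (Real.summable_one_div_nat_pow.mpr one_lt_two)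
  have herr : ∀ n, ‖((A + δ n) / d n) ^ 2 - A ^ 2 * (1 / d n ^ 2)‖
      ≤ (2 * M * C + C ^ 2) / l ^ 2 * (1 / ((n : ℝ) + 1) ^ 2) := fun n => by
    rw [Real.norm_eq_abs, mul_one_div]
    exact abs_sq_div_add_sub_sq_div_le hl (hd n) (by nlinarith [n.cast_nonneg (α := ℝ)]) hA
      (hδ n)
  have hbound := (hinv.mul_left ((2 * M * C + C ^ 2) / l ^ 2)).hasSum
  have hsum' := (hsum.mul_left (A ^ 2)).add (Summable.of_norm_bounded (hinv.mul_left _) herr)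
  simp only [add_sub_cancel] at hsum'
  refine ⟨hsum', ?_⟩
  rw [← tsum_mul_left, ← hsum'.tsum_sub (hsum.mul_left _), ← tsum_mul_left]
  exact tsum_of_norm_bounded hbound herr

theorem abs_sq_mul_sub_le {c₀ B l S : ℝ} (hl : 1 ≤ l)
    (hS : |S - 1 / (4 * l ^ 3)| ≤ 1 / l ^ 4) :
    |(2 * l * c₀ + B) ^ 2 * S - c₀ ^ 2 / l|
      ≤ ((2 * |c₀| + |B|) ^ 2 + |c₀| * |B| + B ^ 2 / 4) / l ^ 2 := by
  have hl0 : 0 < l := one_pos.trans_le hl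
  have hsplit : (2 * l * c₀ + B) ^ 2 * S - c₀ ^ 2 / l
      = (2 * l * c₀ + B) ^ 2 * (S - 1 / (4 * l ^ 3)) + c₀ * B / l ^ 2
        + B ^ 2 / (4 * l ^ 3) := by
    field_simp
    ring
  rw [hsplit]
  calc _ ≤ |(2 * l * c₀ + B) ^ 2 * (S - 1 / (4 * l ^ 3))| + |c₀ * B / l ^ 2|
          + |B ^ 2 / (4 * l ^ 3)| := abs_add_three _ _ _
    _ ≤ (l * (2 * |c₀| + |B|)) ^ 2 * (1 / l ^ 4) + |c₀| * |B| / l ^ 2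
          + B ^ 2 / (4 * l ^ 2) := by
        rw [abs_mul, abs_pow, abs_div, abs_mul, abs_div, abs_of_pos (by positivity : 0 < l ^ 2),
          abs_of_pos (by positivity : 0 < 4 * l ^ 3), abs_of_nonneg (sq_nonneg B)]
        gcongr
        · exact abs_two_mul_mul_add_le hl
        · norm_num
    _ = ((2 * |c₀| + |B|) ^ 2 + |c₀| * |B| + B ^ 2 / 4) / l ^ 2 := by field_simp

theorem abs_sub_add_two_mul_sub_le {s p q c₀ r l t K₁ K₂ : ℝ} (hl : 1 ≤ l)
    (hp : |p - (s - r + c₀ ^ 2)| ≤ K₁ / t) (hq : |q - c₀| ≤ K₂ / t) :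
    |s - p + 2 * l * q - (2 * l * c₀ + (r - c₀ ^ 2))| ≤ l * (K₁ + 2 * K₂) / t := by
  have hK₁ : 0 ≤ K₁ / t := (abs_nonneg _).trans hp
  have hl0 : 0 ≤ 2 * l := by linarith
  calc |s - p + 2 * l * q - (2 * l * c₀ + (r - c₀ ^ 2))|
        = |-(p - (s - r + c₀ ^ 2)) + 2 * l * (q - c₀)| := by ring_nf
    _ ≤ |-(p - (s - r + c₀ ^ 2))| + |2 * l * (q - c₀)| := abs_add_le _ _
    _ = |p - (s - r + c₀ ^ 2)| + 2 * l * |q - c₀| := by rw [abs_neg, abs_mul, abs_of_nonneg hl0]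
    _ ≤ l * (K₁ / t) + 2 * l * (K₂ / t) := by
        gcongr
        exact hp.trans (le_mul_of_one_le_left hK₁ hl)
    _ = l * (K₁ + 2 * K₂) / t := by ring

theorem second_power_series_asymptotics_general
    (Λ : ℕ → ℂ)
    (c0 r : ℝ)
    (habs : ∃ K : ℝ, ∀ n : ℕ, 1 ≤ n →
      |‖Λ n‖ ^ 2 - (Real.pi ^ 2 * (n : ℝ) ^ 2 - r + c0 ^ 2)| ≤ K / (n : ℝ) ^ 2)
    (hre : ∃ K : ℝ, ∀ n : ℕ, 1 ≤ n → |(Λ n).re - c0| ≤ K / (n : ℝ) ^ 2) :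
    ∃ C R : ℝ, 0 < R ∧ ∀ l : ℝ, R ≤ l →
      Summable (fun n : ℕ =>
        ((Real.pi ^ 2 * ((n : ℝ) + 1) ^ 2 - ‖Λ (n + 1)‖ ^ 2
          + 2 * l * (Λ (n + 1)).re) / (Real.pi ^ 2 * ((n : ℝ) + 1) ^ 2 + l ^ 2)) ^ 2) ∧
      |(∑' n : ℕ,
          ((Real.pi ^ 2 * ((n : ℝ) + 1) ^ 2 - ‖Λ (n + 1)‖ ^ 2
            + 2 * l * (Λ (n + 1)).re) / (Real.pi ^ 2 * ((n : ℝ) + 1) ^ 2 + l ^ 2)) ^ 2)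
        - c0 ^ 2 / l| ≤ C / l ^ 2 := by
  obtain ⟨K₁, hK₁⟩ := habs
  obtain ⟨K₂, hK₂⟩ := hre
  set B := r - c0 ^ 2 with hB
  set M := 2 * |c0| + |B|
  set C := K₁ + 2 * K₂
  refine ⟨M ^ 2 + |c0| * |B| + B ^ 2 / 4
    + (2 * M * C + C ^ 2) * ∑' n : ℕ, 1 / ((n : ℝ) + 1) ^ 2, 1, one_pos, fun l hl => ?_⟩
  have hl0 : 0 < l := one_pos.trans_le hl
  obtain ⟨hS, hSest⟩ := summable_and_abs_tsum_inv_sq_mul_sq_add_sq_sq_sub_le pi_pos hl0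
  rw [show π / (4 * π * l ^ 3) = 1 / (4 * l ^ 3) by field_simp] at hSest
  have hδ (n : ℕ) :=
    abs_sub_add_two_mul_sub_le hl (hK₁ (n + 1) n.succ_pos) (hK₂ (n + 1) n.succ_pos)
  push_cast [← hB] at hδ
  obtain ⟨hsum, hpert⟩ := summable_and_abs_tsum_sq_div_sub_le (A := 2 * l * c0 + B) hl0
    (fun n => le_add_of_nonneg_left (by positivity)) (abs_two_mul_mul_add_le hl) hδ hS
  -- `δ n` was taken to be the numerator minus `A`, so `A + δ n` is the numerator itself.
  simp only [add_sub_cancel] at hsum hpert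
  refine ⟨hsum, ?_⟩
  calc _ ≤ |_ - (2 * l * c0 + B) ^ 2 * _| + |(2 * l * c0 + B) ^ 2 * _ - c0 ^ 2 / l| :=
        abs_sub_le _ _ _
    _ ≤ _ := add_le_add hpert (abs_sq_mul_sub_le hl hSest)
    _ = _ := by ring

/-- for `a ∈ C³[0,1]`, `b ∈ C²[0,1]`, let `Λ n` (`n ≥ 1`) be the
eigenvalues in the upper half-plane enumeration and `c₀ = −⟨a⟩`. Then for real
`λ → +∞`,
`Σ_{n≥1} ((π²n² − |Λ n|² + 2λ Re Λ n)/(π²n² + λ²))² = c₀² λ^{−1} + O(λ^{−2})`. -/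
theorem second_power_series_asymptotics (a b : ℝ → ℝ)
    (ha : ContDiffOn ℝ 3 a (Set.Icc 0 1))
    (hb : ContDiffOn ℝ 2 b (Set.Icc 0 1))
    (Λ : ℕ → ℂ)
    (hev : ∀ n : ℕ, 1 ≤ n → IsDampedEigenvalue a b (Λ n))
    (hup : ∀ n : ℕ, 1 ≤ n → 0 ≤ (Λ n).im)
    (hmono : ∀ n k : ℕ, 1 ≤ n → n ≤ k → (Λ n).im ≤ (Λ k).im)
    (c0 r : ℝ) (hc0 : c0 = -intAvg a) (hr : r = intAvg (fun x => (a x) ^ 2 + b x))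
    (habs : ∃ K : ℝ, ∀ n : ℕ, 1 ≤ n →
      |‖Λ n‖ ^ 2 - (Real.pi ^ 2 * (n : ℝ) ^ 2 - r + c0 ^ 2)| ≤ K / (n : ℝ) ^ 2)
    (hre : ∃ K : ℝ, ∀ n : ℕ, 1 ≤ n → |(Λ n).re - c0| ≤ K / (n : ℝ) ^ 2) :
    ∃ C R : ℝ, 0 < R ∧ ∀ l : ℝ, R ≤ l →
      Summable (fun n : ℕ =>
        ((Real.pi ^ 2 * ((n : ℝ) + 1) ^ 2 - ‖Λ (n + 1)‖ ^ 2
          + 2 * l * (Λ (n + 1)).re) / (Real.pi ^ 2 * ((n : ℝ) + 1) ^ 2 + l ^ 2)) ^ 2) ∧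
      |(∑' n : ℕ,
          ((Real.pi ^ 2 * ((n : ℝ) + 1) ^ 2 - ‖Λ (n + 1)‖ ^ 2
            + 2 * l * (Λ (n + 1)).re) / (Real.pi ^ 2 * ((n : ℝ) + 1) ^ 2 + l ^ 2)) ^ 2)
        - c0 ^ 2 / l| ≤ C / l ^ 2 :=
  second_power_series_asymptotics_general Λ c0 r habs hre
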